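/- arXiv:2006.02622 — 3 statements merged into one kernel-verified Lean document; each statement's English description precedes it below -/
import Mathlib

section
/- Let V_0 ⊂ ℝ^d be a finite set of nonzero vectors and let w_0, w_1, …, w_K ∈ ℝ^d be vectors with w_{k−1} ≠ w_k for every 1 ≤ k ≤ K. For 0 ≤ k ≤ K define V_k = V_0 ∪ { w_i − w_{i−1} : 1 ≤ i ≤ k }. Then the set { ξ ∈ ℝ^d : v · ξ > 0 for all v ∈ V_K } is nonempty if and only if cone(V_0) is pointed and for every k ∈ {1, …, K}, −(w_k − w_{k−1}) ∉ cone(V_{k−1}). -/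
/-!
If `ξ` is strictly positive on the finite set `V_K`, every nonzero element of `cone(V_K)` pairs
positively with `ξ`. This makes `cone(V_0)` salient, keeps `-(w_k - w_{k-1})` out of
`cone(V_{k-1})`, and bounds the coefficients of the conic combinations that land in a compact set,
so that `cone(V_0)` is closed.

Conversely, adjoining a generator `u` to a salient cone with `-u` outside it keeps the cone
salient, so `cone(V_K)` is salient by induction. The nonzero part of a salient cone is convex,
hence `0 ∉ conv(V_K)`, and separating the compact set `conv(V_K)` from `0` yields `ξ`.
-/

open scoped BigOperators

/-- The conic hull of a set `V ⊆ ℝ^d`: all nonnegative (finite) linear combinations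
of elements of `V`. -/
def conicHull {d : ℕ} (V : Set (Fin d → ℝ)) : Set (Fin d → ℝ) :=
  {x | ∃ (k : ℕ) (θ : Fin k → ℝ) (u : Fin k → Fin d → ℝ),
    (∀ i, 0 ≤ θ i) ∧ (∀ i, u i ∈ V) ∧ x = ∑ i, θ i • u i}

/-- A set `C ⊆ ℝ^d` is a pointed cone if it is a cone (closed under multiplication by
nonnegative scalars) which is closed, convex, and satisfies `C ∩ (-C) = {0}`. -/
def IsPointedCone {d : ℕ} (C : Set (Fin d → ℝ)) : Prop :=
  (∀ v ∈ C, ∀ θ : ℝ, 0 ≤ θ → θ • v ∈ C) ∧ IsClosed C ∧ Convex ℝ C ∧ C ∩ (-C) = {0}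

/-- The set `V_k = V_0 ∪ { w_i − w_{i−1} : 1 ≤ i ≤ k }`. -/
def stepSet {d : ℕ} (V0 : Set (Fin d → ℝ)) (w : ℕ → Fin d → ℝ) (k : ℕ) :
    Set (Fin d → ℝ) :=
  V0 ∪ {x | ∃ i, 1 ≤ i ∧ i ≤ k ∧ x = w i - w (i - 1)}

open scoped NNReal Matrix

namespace ConvexCone

variable {𝕜 E : Type*} [Field 𝕜] [LinearOrder 𝕜] [AddCommGroup E] [Module 𝕜 E]
  {C : ConvexCone 𝕜 E}

lemma Salient.convex_sdiff_zero (hC : C.Salient) : Convex 𝕜 ((C : Set E) \ {0}) := by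
  rintro x ⟨hx, hx0⟩ y ⟨hy, hy0⟩ a b ha hb hab
  refine ⟨C.convex hx hy ha hb hab, fun h => ?_⟩
  rw [Set.mem_singleton_iff, add_eq_zero_iff_eq_neg] at h
  rcases ha.eq_or_lt with rfl | ha
  · rw [zero_add] at hab
    simp_all
  rcases hb.eq_or_lt with rfl | hb
  · rw [add_zero] at hab
    simp_all
  exact hC _ (C.smul_mem ha hx) (smul_ne_zero ha.ne' hx0)
    (by rw [h, neg_neg]; exact C.smul_mem hb hy)

lemma Salient.zero_notMem_convexHull {s : Set E} (hC : C.Salient) (hs : s ⊆ C)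
    (h0 : (0 : E) ∉ s) : (0 : E) ∉ convexHull 𝕜 s := fun h =>
  (convexHull_min (Set.subset_sdiff_singleton hs h0) hC.convex_sdiff_zero h).2 rfl

end ConvexCone

namespace PointedCone

section Algebraic

variable {𝕜 E : Type*} [Field 𝕜] [LinearOrder 𝕜] [IsStrictOrderedRing 𝕜]
  [AddCommGroup E] [Module 𝕜 E] {s : Set E} {f : E →ₗ[𝕜] 𝕜}

lemma eq_zero_or_pos_of_mem_hull (hf : ∀ v ∈ s, 0 < f v) {x : E} (hx : x ∈ hull 𝕜 s) :
    x = 0 ∨ 0 < f x := by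
  induction hx using Submodule.span_induction with
  | mem x hx => exact .inr (hf x hx)
  | zero => exact .inl rfl
  | add x y _ _ hx hy =>
    rcases hx with rfl | hx <;> rcases hy with rfl | hy <;> simp_all [add_pos]
  | smul c x _ hx =>
    obtain ⟨c, hc⟩ := c
    rcases hc.eq_or_lt with rfl | hc
    · simp
    rcases hx with rfl | hx
    · simp
    exact .inr (by simpa [Nonneg.mk_smul] using mul_pos hc hx)

lemma neg_notMem_hull_of_pos (hf : ∀ v ∈ s, 0 < f v) {u : E} (hu : 0 < f u) :
    -u ∉ hull 𝕜 s := fun h => by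
  rcases eq_zero_or_pos_of_mem_hull hf h with h | h
  · simp_all
  · rw [map_neg] at h
    linarith

lemma salient_hull_of_pos (hf : ∀ v ∈ s, 0 < f v) : (hull 𝕜 s : ConvexCone 𝕜 E).Salient :=
  fun _ hx hx0 =>
    neg_notMem_hull_of_pos hf ((eq_zero_or_pos_of_mem_hull hf hx).resolve_left hx0)

lemma salient_hull_insert {u : E} (hs : (hull 𝕜 s : ConvexCone 𝕜 E).Salient)
    (hu : -u ∉ hull 𝕜 s) : (hull 𝕜 (insert u s) : ConvexCone 𝕜 E).Salient := by
  intro x hx hx0 hnx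
  obtain ⟨a, p, hp, rfl⟩ := Submodule.mem_span_insert.1 hx
  obtain ⟨b, q, hq, hbq⟩ := Submodule.mem_span_insert.1 hnx
  have hsum : (a + b) • u = -(p + q) := by
    rw [add_smul, eq_neg_iff_add_eq_zero, add_add_add_comm, ← hbq, add_neg_cancel]
  rcases eq_or_ne (a + b) 0 with hab | hab
  · obtain ⟨rfl, rfl⟩ := add_eq_zero.1 hab
    simp only [zero_smul, zero_add] at hbq hx0
    exact hs p hp hx0 (hbq ▸ hq)
  · refine hu ?_
    have hu' : -u = (a + b)⁻¹ • (p + q) := by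
      rw [← neg_neg (p + q), ← hsum, smul_neg, inv_smul_smul₀ hab]
    exact hu' ▸ Submodule.smul_mem _ _ (add_mem hp hq)

end Algebraic

section Topological

variable {E : Type*} [AddCommGroup E] [Module ℝ E] [TopologicalSpace E]
  [IsTopologicalAddGroup E] [ContinuousSMul ℝ E] [T2Space E] {s : Set E}

lemma isClosed_hull_of_pos [CompactlyGeneratedSpace E] (hs : s.Finite) {f : StrongDual ℝ E}
    (hf : ∀ v ∈ s, 0 < f v) : IsClosed (hull ℝ s : Set E) := by
  have := hs.fintype
  let Φ : (s → ℝ≥0) → E := fun c => ∑ v, c v • (v : E)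
  have hΦ_range : Set.range Φ = hull ℝ s := by
    ext x
    have := Submodule.mem_span_range_iff_exists_fun (R := ℝ≥0) (v := ((↑) : s → E)) (x := x)
    rw [Subtype.range_coe] at this
    exact this.symm
  have hΦ_cont : Continuous Φ := by fun_prop
  -- On the preimage of a compact set `K`, the coefficient `c v` is at most `sup f(K) / f v`.
  have hΦ : IsProperMap Φ := by
    refine isProperMap_iff_isCompact_preimage.2 ⟨hΦ_cont, fun K hK => ?_⟩
    obtain ⟨M, hM⟩ := hK.bddAbove_image f.continuous.continuousOn
    refine (isCompact_univ_pi fun v : s => isCompact_Icc (a := 0)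
      (b := (M / f v).toNNReal)).of_isClosed_subset (hK.isClosed.preimage hΦ_cont)
      fun c hc v _ => ⟨zero_le, ?_⟩
    rw [← Real.toNNReal_coe (r := c v)]
    refine Real.toNNReal_le_toNNReal ((le_div_iff₀ (hf v v.2)).2 ?_)
    calc (c v : ℝ) * f v ≤ ∑ w, (c w : ℝ) * f w :=
          Finset.single_le_sum (fun w _ => mul_nonneg (c w).2 (hf w w.2).le) (Finset.mem_univ v)
      _ = f (Φ c) := by simp [Φ, NNReal.smul_def]
      _ ≤ M := hM ⟨_, hc, rfl⟩
  rw [← hΦ_range]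
  exact hΦ.isClosedMap.isClosed_range

lemma exists_pos_of_salient_hull [LocallyConvexSpace ℝ E] (hs : s.Finite) (h0 : (0 : E) ∉ s)
    (hsal : (hull ℝ s : ConvexCone ℝ E).Salient) :
    ∃ f : StrongDual ℝ E, ∀ v ∈ s, 0 < f v := by
  obtain ⟨f, u, hf0, hfu⟩ := geometric_hahn_banach_point_closed (convex_convexHull ℝ s)
    (hs.isCompact_convexHull ℝ).isClosed (hsal.zero_notMem_convexHull subset_hull h0)
  exact ⟨f, fun v hv => (map_zero f ▸ hf0).trans (hfu v (subset_convexHull ℝ s hv))⟩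

end Topological

end PointedCone

section Coordinates

variable {d : ℕ}

lemma exists_forall_dotProduct_pos_iff {s : Set (Fin d → ℝ)} :
    (∃ ξ : Fin d → ℝ, ∀ v ∈ s, 0 < v ⬝ᵥ ξ) ↔
      ∃ f : StrongDual ℝ (Fin d → ℝ), ∀ v ∈ s, 0 < f v := by
  constructor
  · rintro ⟨ξ, hξ⟩
    refine ⟨LinearMap.toContinuousLinearMap (dotProductEquiv ℝ (Fin d) ξ), fun v hv => ?_⟩
    simpa [dotProduct_comm] using hξ v hv
  · rintro ⟨f, hf⟩
    refine ⟨(dotProductEquiv ℝ (Fin d)).symm f, fun v hv => ?_⟩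
    rw [dotProduct_comm, ← dotProductEquiv_apply_apply, LinearEquiv.apply_symm_apply]
    exact hf v hv

lemma conicHull_eq_hull (V : Set (Fin d → ℝ)) : conicHull V = PointedCone.hull ℝ V := by
  ext x
  rw [SetLike.mem_coe, Submodule.mem_span_set']
  constructor
  · rintro ⟨k, θ, u, hθ, hu, rfl⟩
    exact ⟨k, fun i => ⟨θ i, hθ i⟩, fun i => ⟨u i, hu i⟩, rfl⟩
  · rintro ⟨k, θ, u, rfl⟩
    exact ⟨k, fun i => θ i, fun i => u i, fun i => (θ i).2, fun i => (u i).2, rfl⟩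

lemma isPointedCone_coe_iff (C : PointedCone ℝ (Fin d → ℝ)) :
    IsPointedCone (C : Set (Fin d → ℝ)) ↔
      IsClosed (C : Set (Fin d → ℝ)) ∧ (C : ConvexCone ℝ (Fin d → ℝ)).Salient := by
  rw [C.salient_iff_inter_neg_eq_singleton]
  exact ⟨fun h => ⟨h.2.1, h.2.2.2⟩,
    fun h => ⟨fun v hv θ hθ => C.smul_mem hθ hv, h.1, C.convex, h.2⟩⟩

variable {V0 : Set (Fin d → ℝ)} {w : ℕ → Fin d → ℝ}

lemma stepSet_eq_union_image (k : ℕ) :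
    stepSet V0 w k = V0 ∪ (fun i => w i - w (i - 1)) '' Set.Icc 1 k := by
  ext x
  simp [stepSet, eq_comm, and_assoc]

lemma stepSet_zero : stepSet V0 w 0 = V0 := by
  simp [stepSet]

lemma stepSet_succ (k : ℕ) :
    stepSet V0 w (k + 1) = insert (w (k + 1) - w k) (stepSet V0 w k) := by
  rw [stepSet_eq_union_image, stepSet_eq_union_image, ← Order.succ_eq_add_one,
    ← Set.insert_Icc_right_eq_Icc_succ (by simp : 1 ≤ Order.succ k), Set.image_insert_eq]
  simp

lemma stepSet_mono {k l : ℕ} (h : k ≤ l) : stepSet V0 w k ⊆ stepSet V0 w l := by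
  rintro x (hx | ⟨i, h1, h2, rfl⟩)
  · exact .inl hx
  · exact .inr ⟨i, h1, h2.trans h, rfl⟩

lemma sub_mem_stepSet {k K : ℕ} (hk : 1 ≤ k) (hkK : k ≤ K) :
    w k - w (k - 1) ∈ stepSet V0 w K :=
  .inr ⟨k, hk, hkK, rfl⟩

lemma stepSet_finite (hV0 : V0.Finite) (K : ℕ) : (stepSet V0 w K).Finite := by
  rw [stepSet_eq_union_image]
  exact hV0.union ((Set.finite_Icc 1 K).image _)

lemma zero_notMem_stepSet {K : ℕ} (h0 : ∀ v ∈ V0, v ≠ 0)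
    (hw : ∀ k, 1 ≤ k → k ≤ K → w (k - 1) ≠ w k) :
    (0 : Fin d → ℝ) ∉ stepSet V0 w K := by
  rintro (h | ⟨i, h1, h2, h⟩)
  · exact h0 0 h rfl
  · exact hw i h1 h2 (sub_eq_zero.1 h.symm).symm

lemma salient_hull_stepSet {K : ℕ}
    (hV0 : (PointedCone.hull ℝ V0 : ConvexCone ℝ (Fin d → ℝ)).Salient)
    (hstep : ∀ k, 1 ≤ k → k ≤ K →
      -(w k - w (k - 1)) ∉ PointedCone.hull ℝ (stepSet V0 w (k - 1)))
    {k : ℕ} (hk : k ≤ K) :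
    (PointedCone.hull ℝ (stepSet V0 w k) : ConvexCone ℝ (Fin d → ℝ)).Salient := by
  induction k with
  | zero => rwa [stepSet_zero]
  | succ k ih =>
    rw [stepSet_succ]
    exact PointedCone.salient_hull_insert (ih (by omega))
      (by simpa using hstep (k + 1) (by omega) hk)

end Coordinates

/-- correctness of the recursive LC-LEP solver. With
`V_k = V_0 ∪ { w_i − w_{i−1} : 1 ≤ i ≤ k }`, the set
`{ξ : v · ξ > 0 for all v ∈ V_K}` is nonempty iff `cone(V_0)` is pointed and for every
`1 ≤ k ≤ K`, `−(w_k − w_{k−1}) ∉ cone(V_{k−1})`. -/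
theorem lclep_solver_correct {d : ℕ} (K : ℕ) (V0 : Set (Fin d → ℝ))
    (hV0 : V0.Finite) (h0 : ∀ v ∈ V0, v ≠ 0) (w : ℕ → Fin d → ℝ)
    (hw : ∀ k, 1 ≤ k → k ≤ K → w (k - 1) ≠ w k) :
    {ξ : Fin d → ℝ | ∀ v ∈ stepSet V0 w K, 0 < ∑ i, v i * ξ i}.Nonempty ↔
      (IsPointedCone (conicHull V0) ∧
        ∀ k, 1 ≤ k → k ≤ K →
          -(w k - w (k - 1)) ∉ conicHull (stepSet V0 w (k - 1))) := by
  simp only [conicHull_eq_hull, isPointedCone_coe_iff]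
  refine exists_forall_dotProduct_pos_iff.trans ⟨?_, ?_⟩
  · rintro ⟨f, hf⟩
    let g : (Fin d → ℝ) →ₗ[ℝ] ℝ := f
    have hgV0 : ∀ v ∈ V0, 0 < g v := fun v hv => hf v (.inl hv)
    refine ⟨⟨PointedCone.isClosed_hull_of_pos hV0 hgV0, PointedCone.salient_hull_of_pos hgV0⟩,
      fun k hk hkK => ?_⟩
    exact PointedCone.neg_notMem_hull_of_pos (f := g)
      (fun v hv => hf v (stepSet_mono (by omega) hv)) (hf _ (sub_mem_stepSet hk hkK))
  · rintro ⟨⟨-, hsal⟩, hstep⟩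
    exact PointedCone.exists_pos_of_salient_hull (stepSet_finite hV0 K)
      (zero_notMem_stepSet h0 hw) (salient_hull_stepSet hsal hstep le_rfl)
end

section
/- Fix n ≥ 2 and the interaction type (2,1,…,1), i.e., the partition of {1,…,n} with I_1 = {1,2} and remaining blocks the singletons {3}, …, {n}. Let E be the set of Boolean functions on {1,…,n} and let σ : {0,…,2^n−1} → E be a bijection which is a linear extension of ≺_B (i.e., α ≺_B β implies σ^{-1}(α) < σ^{-1}(β)). Then the following are equivalent: (1) there exist positive reals ℓ_1,…,ℓ_n, δ_1,…,δ_n such that p_{σ(0)}(ℓ,δ) < p_{σ(1)}(ℓ,δ) < ⋯ < p_{σ(2^n−1)}(ℓ,δ); (2) there exist real numbers x_{1,(a,b)} for (a,b) ∈ {0,1}^2 and x_{k,c} for 3 ≤ k ≤ n, c ∈ {0,1}, satisfying −x_{1,(0,0)} + x_{1,(0,1)} + x_{1,(1,0)} − x_{1,(1,1)} > 0 and p'_{σ(0)}(x) < p'_{σ(1)}(x) < ⋯ < p'_{σ(2^n−1)}(x). -/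
open Real Finset Function Filter

/-!
Taking logarithms turns a realization by positive parameters into a linear one, and the corner
inequality `-x_{1,(0,0)} + x_{1,(0,1)} + x_{1,(1,0)} - x_{1,(1,1)} > 0` is the logarithm of
`(A + δ₁) (A + δ₂) > A (A + δ₁ + δ₂)`, where `A = ℓ₁ + ℓ₂`.

Conversely, as `σ` is a linear extension, a linear realization is strictly monotone on the
Boolean lattice, so it increases in each coordinate. After scaling by some `M > 0` and
exponentiating, each singleton factor `ℓ_k + δ_k [c]` can be matched with `exp (M x_{k,c})`,
while the block `{1, 2}` requires
`e^{M x_{1,(0,1)}} + e^{M x_{1,(1,0)}} = e^{M x_{1,(0,0)}} + e^{M x_{1,(1,1)}}`. The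
difference of the two sides vanishes at `M = 0` with derivative the corner expression, so it is
positive for small `M`, and it is negative for large `M` since `x_{1,(1,1)}` is the largest value;
the intermediate value theorem provides `M`.
-/

theorem HasDerivAt.exists_gt_of_pos {g : ℝ → ℝ} {g' a : ℝ} (hg : HasDerivAt g g' a)
    (hg' : 0 < g') : ∃ b > a, g a < g b := by
  obtain ⟨t, hslope, ht⟩ :=
    ((hg.tendsto_slope_zero_right.eventually (lt_mem_nhds hg')).and self_mem_nhdsWithin).exists
  refine ⟨a + t, lt_add_of_pos_right a ht, ?_⟩
  rw [smul_eq_mul] at hslope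
  exact sub_pos.1 (pos_of_mul_pos_right hslope (inv_nonneg.2 (le_of_lt ht)))

theorem eventually_two_mul_exp_mul_lt {u w : ℝ} (h : u < w) :
    ∀ᶠ M in atTop, 2 * exp (M * u) < exp (M * w) := by
  have hgap : Tendsto (fun M => M * (w - u)) atTop atTop :=
    tendsto_id.atTop_mul_const (sub_pos.2 h)
  filter_upwards [hgap.eventually_gt_atTop (log 2)] with M hM
  calc 2 * exp (M * u) = exp (log 2 + M * u) := by rw [exp_add, exp_log two_pos]
    _ < exp (M * w) := exp_lt_exp.2 (by rw [mul_sub] at hM; linarith)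

theorem exists_pos_exp_add_exp_eq {y₀₀ y₀₁ y₁₀ y₁₁ : ℝ} (hc : y₁₁ + y₀₀ < y₀₁ + y₁₀)
    (h₀₁ : y₀₁ < y₁₁) (h₁₀ : y₁₀ < y₁₁) :
    ∃ M > 0, exp (M * y₀₁) + exp (M * y₁₀) = exp (M * y₀₀) + exp (M * y₁₁) := by
  set g : ℝ → ℝ := fun M => exp (M * y₀₁) + exp (M * y₁₀) - exp (M * y₀₀) - exp (M * y₁₁)
  have hg : HasDerivAt g (y₀₁ + y₁₀ - y₀₀ - y₁₁) 0 := by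
    have hexp (y : ℝ) : HasDerivAt (fun M => exp (M * y)) y 0 := by
      simpa using ((hasDerivAt_id (0 : ℝ)).mul_const y).exp
    exact (((hexp _).add (hexp _)).sub (hexp _)).sub (hexp _)
  obtain ⟨M₀, hM₀, hgM₀⟩ := hg.exists_gt_of_pos (by linarith)
  obtain ⟨M₁, h₀₁M₁, h₁₀M₁, hM₀₁⟩ := ((eventually_two_mul_exp_mul_lt h₀₁).and
    ((eventually_two_mul_exp_mul_lt h₁₀).and (eventually_ge_atTop M₀))).exists
  have hgM₁ : g M₁ < 0 := by
    have := exp_pos (M₁ * y₀₀)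
    simp only [g]
    linarith
  have hg0 : g 0 = 0 := by simp [g]
  obtain ⟨M, hM, hgM⟩ := intermediate_value_Icc' hM₀₁ (by fun_prop : Continuous g).continuousOn
    ⟨hgM₁.le, hg0 ▸ hgM₀.le⟩
  exact ⟨M, lt_of_lt_of_le hM₀ hM.1, by simp only [g] at hgM; linarith⟩

theorem log_add_log_lt_log_add_log {a b c d : ℝ} (ha : 0 < a) (hb : 0 < b) (hc : 0 < c)
    (hd : 0 < d) (h : a * d < b * c) : log a + log d < log b + log c := by
  rw [← log_mul ha.ne' hd.ne', ← log_mul hb.ne' hc.ne']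
  exact log_lt_log (mul_pos ha hd) h

section PSD

variable {ι : Type*} (i₀ i₁ : ι) (F : Finset ι)

/-- `p_γ(ℓ, δ)` for the interaction type whose blocks are `{i₀, i₁}` and the singletons of `F` -/
def psdPoly (ℓ δ : ι → ℝ) (γ : ι → Bool) : ℝ :=
  (ℓ i₀ + (if γ i₀ then δ i₀ else 0) + ℓ i₁ + (if γ i₁ then δ i₁ else 0)) *
    ∏ k ∈ F, (ℓ k + if γ k then δ k else 0)

def linPsdPoly (x₁ : Bool → Bool → ℝ) (x : ι → Bool → ℝ) (γ : ι → Bool) : ℝ :=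
  x₁ (γ i₀) (γ i₁) + ∑ k ∈ F, x k (γ k)

variable {i₀ i₁ F}

theorem add_ite_pos {ℓ δ : ℝ} (hℓ : 0 < ℓ) (hδ : 0 ≤ δ) (c : Bool) :
    0 < ℓ + if c then δ else 0 := by
  cases c <;> simp [hℓ, add_pos_of_pos_of_nonneg hℓ hδ]

variable {ℓ δ : ι → ℝ}

theorem psdPoly_first_factor_pos (hℓ : ∀ k, 0 < ℓ k) (hδ : ∀ k, 0 ≤ δ k)
    (γ : ι → Bool) : 0 < ℓ i₀ + (if γ i₀ then δ i₀ else 0) + ℓ i₁ + (if γ i₁ then δ i₁ else 0) := by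
  linarith [add_ite_pos (hℓ i₀) (hδ i₀) (γ i₀), add_ite_pos (hℓ i₁) (hδ i₁) (γ i₁)]

theorem psdPoly_pos (hℓ : ∀ k, 0 < ℓ k) (hδ : ∀ k, 0 ≤ δ k) (γ : ι → Bool) :
    0 < psdPoly i₀ i₁ F ℓ δ γ :=
  mul_pos (psdPoly_first_factor_pos hℓ hδ γ) (prod_pos fun k _ => add_ite_pos (hℓ k) (hδ k) (γ k))

theorem linPsdPoly_log (hℓ : ∀ k, 0 < ℓ k) (hδ : ∀ k, 0 ≤ δ k) (γ : ι → Bool) :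
    linPsdPoly i₀ i₁ F
      (fun a b => log (ℓ i₀ + (if a then δ i₀ else 0) + ℓ i₁ + (if b then δ i₁ else 0)))
      (fun k c => log (ℓ k + if c then δ k else 0)) γ = log (psdPoly i₀ i₁ F ℓ δ γ) := by
  rw [psdPoly, log_mul (psdPoly_first_factor_pos hℓ hδ γ).ne'
    (prod_pos fun k _ => add_ite_pos (hℓ k) (hδ k) (γ k)).ne',
    log_prod fun k _ => (add_ite_pos (hℓ k) (hδ k) (γ k)).ne']
  rfl

theorem exists_linPsdPoly_strictMono {κ : Type*} [Preorder κ] {σ : κ → ι → Bool}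
    (hℓ : ∀ k, 0 < ℓ k) (hδ : ∀ k, 0 < δ k) (h : StrictMono (psdPoly i₀ i₁ F ℓ δ ∘ σ)) :
    ∃ (x₁ : Bool → Bool → ℝ) (x : ι → Bool → ℝ),
      0 < -(x₁ false false) + x₁ false true + x₁ true false - x₁ true true ∧
      StrictMono (linPsdPoly i₀ i₁ F x₁ x ∘ σ) := by
  have hδ' k := (hδ k).le
  refine ⟨fun a b => log (ℓ i₀ + (if a then δ i₀ else 0) + ℓ i₁ + (if b then δ i₁ else 0)),
    fun k c => log (ℓ k + if c then δ k else 0), ?_, fun i j hij => ?_⟩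
  · simp only [Bool.false_eq_true, if_true, if_false, add_zero]
    have hcorner := log_add_log_lt_log_add_log (by linarith [hℓ i₀, hℓ i₁])
      (by linarith [hℓ i₀, hℓ i₁, hδ i₁]) (by linarith [hℓ i₀, hℓ i₁, hδ i₀])
      (by linarith [hℓ i₀, hℓ i₁, hδ i₀, hδ i₁])
      (show (ℓ i₀ + ℓ i₁) * (ℓ i₀ + δ i₀ + ℓ i₁ + δ i₁) <
        (ℓ i₀ + ℓ i₁ + δ i₁) * (ℓ i₀ + δ i₀ + ℓ i₁) by nlinarith [mul_pos (hδ i₀) (hδ i₁)])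
    linarith
  · simp only [comp_apply, linPsdPoly_log hℓ hδ']
    exact log_lt_log (psdPoly_pos hℓ hδ' _) (h hij)

variable [DecidableEq ι]

theorem linPsdPoly_update_update (h₀ : i₀ ∉ F) (h₁ : i₁ ∉ F) (h₀₁ : i₀ ≠ i₁)
    (x₁ : Bool → Bool → ℝ) (x : ι → Bool → ℝ) (a b : Bool) :
    linPsdPoly i₀ i₁ F x₁ x (update (update (fun _ => false) i₁ b) i₀ a) =
      x₁ a b + ∑ k ∈ F, x k false := by
  rw [linPsdPoly, update_self, update_of_ne h₀₁.symm, update_self]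
  congr 1
  refine sum_congr rfl fun k hk => ?_
  rw [update_of_ne (ne_of_mem_of_not_mem hk h₀), update_of_ne (ne_of_mem_of_not_mem hk h₁)]

theorem linPsdPoly_update_of_mem (h₀ : i₀ ∉ F) (h₁ : i₁ ∉ F) (x₁ : Bool → Bool → ℝ)
    (x : ι → Bool → ℝ) {k : ι} (hk : k ∈ F) (c : Bool) :
    linPsdPoly i₀ i₁ F x₁ x (update (fun _ => false) k c) =
      x₁ false false + x k c + ∑ j ∈ F.erase k, x j false := by
  rw [linPsdPoly, update_of_ne (ne_of_mem_of_not_mem hk h₀).symm,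
    update_of_ne (ne_of_mem_of_not_mem hk h₁).symm, ← add_sum_erase F _ hk, update_self,
    add_assoc]
  congr 2
  exact sum_congr rfl fun j hj => by rw [update_of_ne (ne_of_mem_erase hj)]

variable {x₁ : Bool → Bool → ℝ} {x : ι → Bool → ℝ}

theorem StrictMono.linPsdPoly_lt_left (hx : StrictMono (linPsdPoly i₀ i₁ F x₁ x)) (h₀ : i₀ ∉ F)
    (h₁ : i₁ ∉ F) (h₀₁ : i₀ ≠ i₁) (b : Bool) : x₁ false b < x₁ true b := by
  have := hx (update_strictMono (f := update (fun _ => false) i₁ b) (i := i₀) Bool.false_lt_true)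
  rwa [linPsdPoly_update_update h₀ h₁ h₀₁, linPsdPoly_update_update h₀ h₁ h₀₁,
    add_lt_add_iff_right] at this

theorem StrictMono.linPsdPoly_lt_right (hx : StrictMono (linPsdPoly i₀ i₁ F x₁ x)) (h₀ : i₀ ∉ F)
    (h₁ : i₁ ∉ F) (h₀₁ : i₀ ≠ i₁) (a : Bool) : x₁ a false < x₁ a true := by
  have := hx (update_strictMono (f := update (fun _ => false) i₀ a) (i := i₁) Bool.false_lt_true)
  rwa [update_comm h₀₁, update_comm h₀₁, linPsdPoly_update_update h₀ h₁ h₀₁,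
    linPsdPoly_update_update h₀ h₁ h₀₁, add_lt_add_iff_right] at this

theorem StrictMono.linPsdPoly_lt_of_mem (hx : StrictMono (linPsdPoly i₀ i₁ F x₁ x)) (h₀ : i₀ ∉ F)
    (h₁ : i₁ ∉ F) {k : ι} (hk : k ∈ F) : x k false < x k true := by
  have := hx (update_strictMono (f := fun _ => false) (i := k) Bool.false_lt_true)
  rwa [linPsdPoly_update_of_mem h₀ h₁ x₁ x hk, linPsdPoly_update_of_mem h₀ h₁ x₁ x hk,
    add_lt_add_iff_right, add_lt_add_iff_left] at this

theorem exists_psdPoly_eq_exp (h₀ : i₀ ∉ F) (h₁ : i₁ ∉ F) (h₀₁ : i₀ ≠ i₁)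
    (hx₁ : ∀ b, x₁ false b < x₁ true b) (hx₁' : ∀ a, x₁ a false < x₁ a true)
    (hx : ∀ k ∈ F, x k false < x k true)
    (hc : x₁ true true + x₁ false false < x₁ false true + x₁ true false) :
    ∃ M > 0, ∃ ℓ δ : ι → ℝ, (∀ k, 0 < ℓ k) ∧ (∀ k, 0 < δ k) ∧
      ∀ γ, psdPoly i₀ i₁ F ℓ δ γ = exp (M * linPsdPoly i₀ i₁ F x₁ x γ) := by
  obtain ⟨M, hM, hMeq⟩ := exists_pos_exp_add_exp_eq hc (hx₁ true) (hx₁' true)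
  have hexp {u v : ℝ} (h : u < v) : 0 < exp (M * v) - exp (M * u) :=
    sub_pos.2 (exp_lt_exp.2 (mul_lt_mul_of_pos_left h hM))
  let ℓ k := if k ∈ F then exp (M * x k false) else exp (M * x₁ false false) / 2
  let δ k := if k ∈ F then exp (M * x k true) - exp (M * x k false)
    else if k = i₀ then exp (M * x₁ true false) - exp (M * x₁ false false)
    else exp (M * x₁ false true) - exp (M * x₁ false false)
  refine ⟨M, hM, ℓ, δ, fun k => ?_, fun k => ?_, fun γ => ?_⟩
  · simp only [ℓ]
    split_ifs <;> positivity
  · simp only [δ]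
    split_ifs with hk
    exacts [hexp (hx k hk), hexp (hx₁ false), hexp (hx₁' false)]
  · have hfirst : ℓ i₀ + (if γ i₀ then δ i₀ else 0) + ℓ i₁ + (if γ i₁ then δ i₁ else 0) =
        exp (M * x₁ (γ i₀) (γ i₁)) := by
      simp only [ℓ, δ, h₀, h₁, h₀₁.symm, if_false, if_true]
      cases γ i₀ <;> cases γ i₁ <;> simp only [if_true, if_false, Bool.false_eq_true] <;>
        linarith
    have hfactor (k : ι) (hk : k ∈ F) : ℓ k + (if γ k then δ k else 0) = exp (M * x k (γ k)) := by
      simp only [ℓ, δ, hk, if_true]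
      cases γ k <;> simp
    rw [psdPoly, hfirst, prod_congr rfl hfactor, ← exp_sum, ← exp_add, linPsdPoly, mul_add,
      mul_sum]

theorem psdPoly_realizable_iff {κ : Type*} [Preorder κ] (σ : κ ≃ (ι → Bool))
    (hσ : StrictMono σ.symm) (h₀ : i₀ ∉ F) (h₁ : i₁ ∉ F) (h₀₁ : i₀ ≠ i₁) :
    (∃ ℓ δ : ι → ℝ, (∀ k, 0 < ℓ k) ∧ (∀ k, 0 < δ k) ∧ StrictMono (psdPoly i₀ i₁ F ℓ δ ∘ σ)) ↔
      ∃ (x₁ : Bool → Bool → ℝ) (x : ι → Bool → ℝ),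
        0 < -(x₁ false false) + x₁ false true + x₁ true false - x₁ true true ∧
        StrictMono (linPsdPoly i₀ i₁ F x₁ x ∘ σ) := by
  refine ⟨fun ⟨ℓ, δ, hℓ, hδ, h⟩ => exists_linPsdPoly_strictMono hℓ hδ h,
    fun ⟨x₁, x, hc, h⟩ => ?_⟩
  have hx : StrictMono (linPsdPoly i₀ i₁ F x₁ x) := by
    simpa [comp_def] using h.comp hσ
  obtain ⟨M, hM, ℓ, δ, hℓ, hδ, hexp⟩ := exists_psdPoly_eq_exp h₀ h₁ h₀₁
    (hx.linPsdPoly_lt_left h₀ h₁ h₀₁) (hx.linPsdPoly_lt_right h₀ h₁ h₀₁)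
    (fun _ => hx.linPsdPoly_lt_of_mem h₀ h₁) (by linarith)
  refine ⟨ℓ, δ, hℓ, hδ, fun i j hij => ?_⟩
  simp only [comp_apply, hexp]
  exact exp_lt_exp.2 (mul_lt_mul_of_pos_left (h hij) hM)

end PSD

/-- for interaction type `(2,1,…,1)` (blocks `{1,2}, {3}, …, {n}`), a
linear extension `σ` of the Boolean lattice order is realizable by the PSD polynomials
over positive parameters iff it is realizable by the linearized PSD polynomials subject
to the additional constraint `−x_{1,(0,0)} + x_{1,(0,1)} + x_{1,(1,0)} − x_{1,(1,1)} > 0`. -/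
theorem psd_type_two_one_characterization (n : ℕ) (hn : 2 ≤ n)
    (σ : Fin (2 ^ n) ≃ (Fin n → Bool))
    (hext : ∀ i j : Fin (2 ^ n), (∀ k, σ i k ≤ σ j k) → σ i ≠ σ j → i < j) :
    (∃ ℓ δ : Fin n → ℝ, (∀ k, 0 < ℓ k) ∧ (∀ k, 0 < δ k) ∧
      StrictMono (fun i : Fin (2 ^ n) =>
        (ℓ ⟨0, by omega⟩ + (if σ i ⟨0, by omega⟩ then δ ⟨0, by omega⟩ else 0)
          + ℓ ⟨1, by omega⟩ + (if σ i ⟨1, by omega⟩ then δ ⟨1, by omega⟩ else 0)) *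
        ∏ k ∈ Finset.univ.filter (fun k : Fin n => 2 ≤ (k : ℕ)),
          (ℓ k + (if σ i k then δ k else 0)))) ↔
    (∃ (x1 : Bool → Bool → ℝ) (x : Fin n → Bool → ℝ),
      0 < -(x1 false false) + x1 false true + x1 true false - x1 true true ∧
      StrictMono (fun i : Fin (2 ^ n) =>
        x1 (σ i ⟨0, by omega⟩) (σ i ⟨1, by omega⟩) +
        ∑ k ∈ Finset.univ.filter (fun k : Fin n => 2 ≤ (k : ℕ)), x k (σ i k))) := by
  have hσ : StrictMono σ.symm := fun α β hαβ =>
    hext _ _ (by simpa using fun k => hαβ.le k) (by simpa using hαβ.ne)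
  exact psdPoly_realizable_iff σ hσ (by simp) (by simp) (by simp [Fin.ext_iff])
end

section
/- Fix real numbers x_0, x_1, x_2, x_3 with x_0 < x_1 ≤ x_2 < x_3 and define g : ℝ → ℝ by g(t) = exp(t·x_0) − exp(t·x_1) − exp(t·x_2) + exp(t·x_3). Then g has a positive root (there exists t > 0 with g(t) = 0) if and only if g'(0) < 0, i.e., if and only if x_0 − x_1 − x_2 + x_3 < 0. -/
/-!
If `x₁ - x₀ ≤ x₃ - x₂`, then for `t > 0` the positive part `e^{t x₂}(e^{t(x₃-x₂)} - 1)` of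
`g(t)` strictly dominates the negative part `e^{t x₀}(e^{t(x₁-x₀)} - 1)`, so `g` has no positive
root.
Conversely, if `g'(0) < 0` then `g` is negative just to the right of its root `t = 0`, while
`e^{t x₃}` dominates for large `t`; the intermediate value theorem on `(0, ∞)` gives a root.
-/

open Real Set

theorem HasDerivAt.exists_gt_lt_of_neg {f : ℝ → ℝ} {f' x : ℝ} (hf : HasDerivAt f f' x)
    (hf' : f' < 0) : ∃ z, x < z ∧ f z < f x := by
  obtain ⟨z, hslope, hxz⟩ :=
    ((hf.hasDerivWithinAt.liminf_right_slope_le hf').and_eventually self_mem_nhdsWithin).exists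
  have hxz : x < z := hxz
  rw [slope_def_field, div_lt_iff₀ (sub_pos.2 hxz), zero_mul, sub_neg] at hslope
  exact ⟨z, hxz, hslope⟩

noncomputable def expCombination (x0 x1 x2 x3 t : ℝ) : ℝ :=
  exp (t * x0) - exp (t * x1) - exp (t * x2) + exp (t * x3)

section expCombination

variable {x0 x1 x2 x3 : ℝ}

theorem continuous_expCombination (x0 x1 x2 x3 : ℝ) :
    Continuous (expCombination x0 x1 x2 x3) := by
  unfold expCombination
  fun_prop

theorem expCombination_zero (x0 x1 x2 x3 : ℝ) : expCombination x0 x1 x2 x3 0 = 0 := by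
  simp [expCombination]

theorem hasDerivAt_expCombination_zero (x0 x1 x2 x3 : ℝ) :
    HasDerivAt (expCombination x0 x1 x2 x3) (x0 - x1 - x2 + x3) 0 := by
  have hexp (y : ℝ) : HasDerivAt (fun t => exp (t * y)) y 0 := by
    simpa using ((hasDerivAt_id (0 : ℝ)).mul_const y).exp
  exact (((hexp x0).sub (hexp x1)).sub (hexp x2)).add (hexp x3)

theorem expCombination_pos (h01 : x0 < x1) (h02 : x0 < x2) (h : 0 ≤ x0 - x1 - x2 + x3)
    {t : ℝ} (ht : 0 < t) : 0 < expCombination x0 x1 x2 x3 t := by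
  have hsplit (u v : ℝ) : exp (t * v) = exp (t * u) * exp (t * (v - u)) := by
    rw [← exp_add]; ring_nf
  have hgap : 0 < exp (t * (x1 - x0)) - 1 := sub_pos.2 (one_lt_exp_iff.2 (by nlinarith))
  have key :
      exp (t * x0) * (exp (t * (x1 - x0)) - 1) < exp (t * x2) * (exp (t * (x3 - x2)) - 1) :=
    calc exp (t * x0) * (exp (t * (x1 - x0)) - 1)
        < exp (t * x2) * (exp (t * (x1 - x0)) - 1) :=
          mul_lt_mul_of_pos_right (exp_lt_exp.2 (by nlinarith)) hgap
      _ ≤ exp (t * x2) * (exp (t * (x3 - x2)) - 1) := by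
          gcongr exp (t * x2) * (exp (t * ?_) - 1)
          linarith
  rw [expCombination, hsplit x0 x1, hsplit x2 x3]
  linarith

theorem exists_pos_expCombination_pos (h12 : x1 ≤ x2) (h23 : x2 < x3) :
    ∃ T, 0 < T ∧ 0 < expCombination x0 x1 x2 x3 T := by
  set T := log 2 / (x3 - x2)
  have hT : 0 < T := div_pos (log_pos one_lt_two) (sub_pos.2 h23)
  have hdouble : exp (T * x3) = 2 * exp (T * x2) := by
    have hlog : T * (x3 - x2) = log 2 := div_mul_cancel₀ _ (sub_pos.2 h23).ne'
    rw [show T * x3 = log 2 + T * x2 by linarith, exp_add, exp_log two_pos]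
  have hmono : exp (T * x1) ≤ exp (T * x2) := exp_le_exp.2 (by gcongr)
  refine ⟨T, hT, ?_⟩
  rw [expCombination, hdouble]
  linarith [exp_pos (T * x0)]

end expCombination

/-- for `x_0 < x_1 ≤ x_2 < x_3`, the function
`g(t) = e^{t x_0} − e^{t x_1} − e^{t x_2} + e^{t x_3}` has a positive root iff
`g'(0) = x_0 − x_1 − x_2 + x_3 < 0`. -/
theorem exp_combination_pos_root_iff (x0 x1 x2 x3 : ℝ)
    (h01 : x0 < x1) (h12 : x1 ≤ x2) (h23 : x2 < x3) :
    (∃ t : ℝ, 0 < t ∧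
      Real.exp (t * x0) - Real.exp (t * x1) - Real.exp (t * x2) + Real.exp (t * x3) = 0)
      ↔ x0 - x1 - x2 + x3 < 0 := by
  constructor
  · rintro ⟨t, ht, hroot⟩
    by_contra! h
    exact (expCombination_pos h01 (h01.trans_le h12) h ht).ne' hroot
  · intro h
    obtain ⟨s, hs, hneg⟩ := (hasDerivAt_expCombination_zero x0 x1 x2 x3).exists_gt_lt_of_neg h
    rw [expCombination_zero] at hneg
    obtain ⟨T, hT, hpos⟩ := exists_pos_expCombination_pos (x0 := x0) h12 h23
    obtain ⟨c, hc, hroot⟩ := isPreconnected_Ioi.intermediate_value hs hT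
      (continuous_expCombination x0 x1 x2 x3).continuousOn ⟨hneg.le, hpos.le⟩
    exact ⟨c, hc, hroot⟩
end
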